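/- With density expressed via Bernoulli's law as rho = ((gamma-1)/(gamma K))^{1/(gamma-1)} (B - |U|^2/2)^{1/(gamma-1)}, the continuity equation in spherical projection coordinates, namely d/dz1 (rho U1) + ((1+|z'|^2)/(2z1)) (d/dz2 (rho U2) + d/dz3 (rho U3)) + (2/z1) rho U1 - (rho/z1)(z2 U2 + z3 U3) = 0, is equivalent (assuming B and K are constant along the flow, i.e., the transport equations for B and K hold) to the deformation equation: (c^2 - U1^2) d(U1)/dz1 + ((1+|z'|^2)/(2z1)) c^2 (d(U2)/dz2 + d(U3)/dz3) + (c^2/z1)(2 U1 - z2 U2 - z3 U3) = U1 sum_{j=2,3} Uj d(Uj)/dz1 + ((1+|z'|^2)/(2z1)) sum_{j=2,3} sum_{i=1,2,3} Uj Ui d(Ui)/dzj, where c^2 = (gamma-1)(B - |U|^2/2). -/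

import Mathlib

/-!
By Bernoulli's law the density is `ρ = C K^(-1/(γ-1)) h^(1/(γ-1))` with
`h = B - |U|²/2 = c²/(γ-1)`, so its logarithmic derivative along the flow is
`((U·∇)h/h - (U·∇)K/K)/(γ-1)`. The transport equations kill `(U·∇)B` and `(U·∇)K`, leaving
`(U·∇)ρ = -(ρ/c²) U·(U·∇)U`. The continuity equation reads `(U·∇)ρ + ρ div U = 0`, and
multiplying it by `c²/ρ ≠ 0` turns it into `c² div U = U·(U·∇)U`, which is the deformation
equation.
-/

noncomputable section

/-- Directional (partial) derivative of a function on `ℝ³`. -/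
def pd (v : ℝ × ℝ × ℝ) (f : ℝ × ℝ × ℝ → ℝ) (p : ℝ × ℝ × ℝ) : ℝ := fderiv ℝ f p v

/-- The density determined from `B, K, |U|²` via Bernoulli's law. -/
def bernoulliDensity (γ : ℝ) (U1 U2 U3 B K : ℝ × ℝ × ℝ → ℝ) (z : ℝ × ℝ × ℝ) : ℝ :=
  ((γ - 1) / (γ * K z)) ^ (1 / (γ - 1)) *
    (B z - (U1 z ^ 2 + U2 z ^ 2 + U3 z ^ 2) / 2) ^ (1 / (γ - 1))

section PartialDerivative

variable {f g : ℝ × ℝ × ℝ → ℝ} {p : ℝ × ℝ × ℝ} (v : ℝ × ℝ × ℝ)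

lemma pd_add (hf : DifferentiableAt ℝ f p) (hg : DifferentiableAt ℝ g p) :
    pd v (fun w => f w + g w) p = pd v f p + pd v g p := by
  simp [pd, fderiv_fun_add hf hg]

lemma pd_sub (hf : DifferentiableAt ℝ f p) (hg : DifferentiableAt ℝ g p) :
    pd v (fun w => f w - g w) p = pd v f p - pd v g p := by
  simp [pd, fderiv_fun_sub hf hg]

lemma pd_mul (hf : DifferentiableAt ℝ f p) (hg : DifferentiableAt ℝ g p) :
    pd v (fun w => f w * g w) p = pd v f p * g p + f p * pd v g p := by
  simp only [pd, fderiv_fun_mul hf hg, add_apply, smul_apply, smul_eq_mul]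
  ring

lemma pd_const_mul (hf : DifferentiableAt ℝ f p) (c : ℝ) :
    pd v (fun w => c * f w) p = c * pd v f p := by
  simp [pd, fderiv_const_mul hf]

lemma pd_div_const (hf : DifferentiableAt ℝ f p) (c : ℝ) :
    pd v (fun w => f w / c) p = pd v f p / c := by
  simp only [div_eq_mul_inv, mul_comm _ c⁻¹, pd_const_mul v hf]

lemma pd_sq (hf : DifferentiableAt ℝ f p) :
    pd v (fun w => f w ^ 2) p = 2 * f p * pd v f p := by
  simp [pd, fderiv_fun_pow 2 hf]

lemma pd_const_div (hf : DifferentiableAt ℝ f p) (hp : f p ≠ 0) (c : ℝ) :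
    pd v (fun w => c / f w) p = -(c / f p) * (pd v f p / f p) := by
  have hinv : HasFDerivAt (fun w => (f w)⁻¹) _ p := (hasFDerivAt_inv hp).comp p hf.hasFDerivAt
  simp only [div_eq_mul_inv]
  rw [pd_const_mul v hinv.differentiableAt, pd, hinv.fderiv]
  simp [pd]
  ring

lemma pd_rpow_const (hf : DifferentiableAt ℝ f p) (hp : f p ≠ 0) (a : ℝ) :
    pd v (fun w => f w ^ a) p = a * f p ^ a * (pd v f p / f p) := by
  simp only [pd, (hf.hasFDerivAt.rpow_const (Or.inl hp)).fderiv, smul_apply, smul_eq_mul,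
    Real.rpow_sub_one hp]
  ring

end PartialDerivative

def projFactor (z : ℝ × ℝ × ℝ) : ℝ := (1 + (z.2.1 ^ 2 + z.2.2 ^ 2)) / (2 * z.1)

def convectiveDeriv (U1 U2 U3 f : ℝ × ℝ × ℝ → ℝ) (z : ℝ × ℝ × ℝ) : ℝ :=
  U1 z * pd (1, 0, 0) f z + projFactor z * (U2 z * pd (0, 1, 0) f z + U3 z * pd (0, 0, 1) f z)

def sphericalDiv (U1 U2 U3 : ℝ × ℝ × ℝ → ℝ) (z : ℝ × ℝ × ℝ) : ℝ :=
  pd (1, 0, 0) U1 z + projFactor z * (pd (0, 1, 0) U2 z + pd (0, 0, 1) U3 z)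
    + (2 * U1 z - z.2.1 * U2 z - z.2.2 * U3 z) / z.1

/-- Bernoulli's law `B = h + |U|² / 2`; for a polytropic gas `c² = (γ - 1) h`. -/
def specificEnthalpy (U1 U2 U3 B : ℝ × ℝ × ℝ → ℝ) (z : ℝ × ℝ × ℝ) : ℝ :=
  B z - (U1 z ^ 2 + U2 z ^ 2 + U3 z ^ 2) / 2

section Flow

variable {U1 U2 U3 B K ρ : ℝ × ℝ × ℝ → ℝ} {z : ℝ × ℝ × ℝ}

lemma continuity_eq_convectiveDeriv_add (hρ : DifferentiableAt ℝ ρ z)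
    (h1 : DifferentiableAt ℝ U1 z) (h2 : DifferentiableAt ℝ U2 z) (h3 : DifferentiableAt ℝ U3 z) :
    pd (1, 0, 0) (fun w => ρ w * U1 w) z
        + projFactor z * (pd (0, 1, 0) (fun w => ρ w * U2 w) z
          + pd (0, 0, 1) (fun w => ρ w * U3 w) z)
        + (2 / z.1) * ρ z * U1 z - (ρ z / z.1) * (z.2.1 * U2 z + z.2.2 * U3 z)
      = convectiveDeriv U1 U2 U3 ρ z + ρ z * sphericalDiv U1 U2 U3 z := by
  rw [pd_mul _ hρ h1, pd_mul _ hρ h2, pd_mul _ hρ h3, convectiveDeriv, sphericalDiv]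
  ring

lemma pd_specificEnthalpy (v : ℝ × ℝ × ℝ) (h1 : DifferentiableAt ℝ U1 z)
    (h2 : DifferentiableAt ℝ U2 z) (h3 : DifferentiableAt ℝ U3 z) (hB : DifferentiableAt ℝ B z) :
    pd v (specificEnthalpy U1 U2 U3 B) z
      = pd v B z - (U1 z * pd v U1 z + U2 z * pd v U2 z + U3 z * pd v U3 z) := by
  unfold specificEnthalpy
  rw [pd_sub _ hB (by fun_prop), pd_div_const _ (by fun_prop),
    pd_add _ (by fun_prop) (by fun_prop), pd_add _ (by fun_prop) (by fun_prop),
    pd_sq _ h1, pd_sq _ h2, pd_sq _ h3]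
  ring

lemma convectiveDeriv_specificEnthalpy (h1 : DifferentiableAt ℝ U1 z)
    (h2 : DifferentiableAt ℝ U2 z) (h3 : DifferentiableAt ℝ U3 z) (hB : DifferentiableAt ℝ B z) :
    convectiveDeriv U1 U2 U3 (specificEnthalpy U1 U2 U3 B) z
      = convectiveDeriv U1 U2 U3 B z
        - (U1 z * convectiveDeriv U1 U2 U3 U1 z + U2 z * convectiveDeriv U1 U2 U3 U2 z
          + U3 z * convectiveDeriv U1 U2 U3 U3 z) := by
  simp only [convectiveDeriv, pd_specificEnthalpy _ h1 h2 h3 hB]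
  ring

variable {γ : ℝ}

lemma bernoulliDensity_eq :
    bernoulliDensity γ U1 U2 U3 B K
      = fun w => ((γ - 1) / (γ * K w)) ^ (1 / (γ - 1))
          * specificEnthalpy U1 U2 U3 B w ^ (1 / (γ - 1)) := rfl

lemma bernoulliDensity_pos (hγ : 1 < γ) (hK : 0 < K z)
    (hh : 0 < specificEnthalpy U1 U2 U3 B z) : 0 < bernoulliDensity γ U1 U2 U3 B K z := by
  have : 0 < γ - 1 := sub_pos.mpr hγ
  rw [bernoulliDensity_eq]
  positivity

lemma differentiableAt_bernoulliDensity (hγ : γ ≠ 0) (hγ1 : γ ≠ 1)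
    (h1 : DifferentiableAt ℝ U1 z) (h2 : DifferentiableAt ℝ U2 z) (h3 : DifferentiableAt ℝ U3 z)
    (hB : DifferentiableAt ℝ B z) (hK : DifferentiableAt ℝ K z) (hK0 : K z ≠ 0)
    (hh : specificEnthalpy U1 U2 U3 B z ≠ 0) :
    DifferentiableAt ℝ (bernoulliDensity γ U1 U2 U3 B K) z := by
  have : γ - 1 ≠ 0 := sub_ne_zero.mpr hγ1
  rw [bernoulliDensity_eq]
  unfold specificEnthalpy at *
  fun_prop (disch := first | assumption | positivity)

lemma pd_bernoulliDensity (v : ℝ × ℝ × ℝ) (hγ : γ ≠ 0) (hγ1 : γ ≠ 1)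
    (h1 : DifferentiableAt ℝ U1 z) (h2 : DifferentiableAt ℝ U2 z) (h3 : DifferentiableAt ℝ U3 z)
    (hB : DifferentiableAt ℝ B z) (hK : DifferentiableAt ℝ K z) (hK0 : K z ≠ 0)
    (hh : specificEnthalpy U1 U2 U3 B z ≠ 0) :
    pd v (bernoulliDensity γ U1 U2 U3 B K) z
      = bernoulliDensity γ U1 U2 U3 B K z / (γ - 1)
          * (pd v (specificEnthalpy U1 U2 U3 B) z / specificEnthalpy U1 U2 U3 B z
            - pd v K z / K z) := by
  have : γ - 1 ≠ 0 := sub_ne_zero.mpr hγ1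
  have hA : DifferentiableAt ℝ (fun w => (γ - 1) / (γ * K w)) z := by
    fun_prop (disch := positivity)
  have hh' : DifferentiableAt ℝ (specificEnthalpy U1 U2 U3 B) z := by
    unfold specificEnthalpy; fun_prop
  rw [bernoulliDensity_eq, pd_mul _ (hA.rpow_const (Or.inl (by positivity)))
    (hh'.rpow_const (Or.inl hh)), pd_rpow_const _ hA (by positivity),
    pd_rpow_const _ hh' hh, pd_const_div _ (by fun_prop) (by positivity),
    pd_const_mul _ hK]
  field_simp
  ring

lemma convectiveDeriv_bernoulliDensity (hγ : γ ≠ 0) (hγ1 : γ ≠ 1)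
    (h1 : DifferentiableAt ℝ U1 z) (h2 : DifferentiableAt ℝ U2 z) (h3 : DifferentiableAt ℝ U3 z)
    (hB : DifferentiableAt ℝ B z) (hK : DifferentiableAt ℝ K z) (hK0 : K z ≠ 0)
    (hh : specificEnthalpy U1 U2 U3 B z ≠ 0) :
    convectiveDeriv U1 U2 U3 (bernoulliDensity γ U1 U2 U3 B K) z
      = bernoulliDensity γ U1 U2 U3 B K z / (γ - 1)
          * (convectiveDeriv U1 U2 U3 (specificEnthalpy U1 U2 U3 B) z
              / specificEnthalpy U1 U2 U3 B z
            - convectiveDeriv U1 U2 U3 K z / K z) := by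
  simp only [convectiveDeriv, pd_bernoulliDensity _ hγ hγ1 h1 h2 h3 hB hK hK0 hh]
  ring

end Flow

lemma deformation_iff_mul_sphericalDiv_eq (γ : ℝ) (U1 U2 U3 B : ℝ × ℝ × ℝ → ℝ) (z : ℝ × ℝ × ℝ) :
    ((γ - 1) * specificEnthalpy U1 U2 U3 B z - U1 z ^ 2) * pd (1, 0, 0) U1 z
          + projFactor z * ((γ - 1) * specificEnthalpy U1 U2 U3 B z)
            * (pd (0, 1, 0) U2 z + pd (0, 0, 1) U3 z)
          + ((γ - 1) * specificEnthalpy U1 U2 U3 B z / z.1)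
            * (2 * U1 z - z.2.1 * U2 z - z.2.2 * U3 z)
        = U1 z * (U2 z * pd (1, 0, 0) U2 z + U3 z * pd (1, 0, 0) U3 z)
          + projFactor z *
            (U2 z * (U1 z * pd (0, 1, 0) U1 z + U2 z * pd (0, 1, 0) U2 z
                + U3 z * pd (0, 1, 0) U3 z)
              + U3 z * (U1 z * pd (0, 0, 1) U1 z + U2 z * pd (0, 0, 1) U2 z
                + U3 z * pd (0, 0, 1) U3 z))
      ↔ (γ - 1) * specificEnthalpy U1 U2 U3 B z * sphericalDiv U1 U2 U3 z
        = U1 z * convectiveDeriv U1 U2 U3 U1 z + U2 z * convectiveDeriv U1 U2 U3 U2 z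
          + U3 z * convectiveDeriv U1 U2 U3 U3 z := by
  unfold sphericalDiv convectiveDeriv
  constructor <;> intro h <;> linear_combination h

theorem continuity_eq_zero_iff_mul_sphericalDiv_eq {γ : ℝ} (hγ : 1 < γ)
    {U1 U2 U3 B K : ℝ × ℝ × ℝ → ℝ} {z : ℝ × ℝ × ℝ}
    (h1 : DifferentiableAt ℝ U1 z) (h2 : DifferentiableAt ℝ U2 z) (h3 : DifferentiableAt ℝ U3 z)
    (hB : DifferentiableAt ℝ B z) (hK : DifferentiableAt ℝ K z) (hK0 : 0 < K z)
    (hh : 0 < specificEnthalpy U1 U2 U3 B z)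
    (htranB : convectiveDeriv U1 U2 U3 B z = 0) (htranK : convectiveDeriv U1 U2 U3 K z = 0) :
    let ρ := bernoulliDensity γ U1 U2 U3 B K
    pd (1, 0, 0) (fun w => ρ w * U1 w) z
        + projFactor z * (pd (0, 1, 0) (fun w => ρ w * U2 w) z
          + pd (0, 0, 1) (fun w => ρ w * U3 w) z)
        + (2 / z.1) * ρ z * U1 z - (ρ z / z.1) * (z.2.1 * U2 z + z.2.2 * U3 z) = 0
      ↔ (γ - 1) * specificEnthalpy U1 U2 U3 B z * sphericalDiv U1 U2 U3 z
        = U1 z * convectiveDeriv U1 U2 U3 U1 z + U2 z * convectiveDeriv U1 U2 U3 U2 z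
          + U3 z * convectiveDeriv U1 U2 U3 U3 z := by
  intro ρ
  have hγ0 : γ ≠ 0 := by positivity
  have hγ1 : γ - 1 ≠ 0 := sub_ne_zero.mpr hγ.ne'
  have hρ : ρ z ≠ 0 := (bernoulliDensity_pos hγ hK0 hh).ne'
  rw [continuity_eq_convectiveDeriv_add (differentiableAt_bernoulliDensity hγ0 hγ.ne' h1 h2 h3
    hB hK hK0.ne' hh.ne') h1 h2 h3,
    convectiveDeriv_bernoulliDensity hγ0 hγ.ne' h1 h2 h3 hB hK hK0.ne' hh.ne',
    convectiveDeriv_specificEnthalpy h1 h2 h3 hB, htranB, htranK]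
  set h := specificEnthalpy U1 U2 U3 B z
  set S := U1 z * convectiveDeriv U1 U2 U3 U1 z + U2 z * convectiveDeriv U1 U2 U3 U2 z
    + U3 z * convectiveDeriv U1 U2 U3 U3 z
  have hfactor : ρ z / (γ - 1) * ((0 - S) / h - 0 / K z) + ρ z * sphericalDiv U1 U2 U3 z
      = ρ z / ((γ - 1) * h) * ((γ - 1) * h * sphericalDiv U1 U2 U3 z - S) := by
    field_simp
    ring
  rw [hfactor, mul_eq_zero, sub_eq_zero, or_iff_right (div_ne_zero hρ (by positivity))]

theorem continuity_iff_deformation_general (γ : ℝ) (hγ : 1 < γ)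
    (D : Set (ℝ × ℝ × ℝ)) (hD : IsOpen D)
    (U1 U2 U3 B K : ℝ × ℝ × ℝ → ℝ)
    (hU1 : ContDiffOn ℝ 1 U1 D) (hU2 : ContDiffOn ℝ 1 U2 D) (hU3 : ContDiffOn ℝ 1 U3 D)
    (hB : ContDiffOn ℝ 1 B D) (hK : ContDiffOn ℝ 1 K D)
    (hKpos : ∀ z ∈ D, 0 < K z)
    (hBq : ∀ z ∈ D, 0 < B z - (U1 z ^ 2 + U2 z ^ 2 + U3 z ^ 2) / 2)
    (htranB : ∀ z ∈ D,
      U1 z * pd (1, 0, 0) B z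
        + ((1 + (z.2.1 ^ 2 + z.2.2 ^ 2)) / (2 * z.1)) *
            (U2 z * pd (0, 1, 0) B z + U3 z * pd (0, 0, 1) B z) = 0)
    (htranK : ∀ z ∈ D,
      U1 z * pd (1, 0, 0) K z
        + ((1 + (z.2.1 ^ 2 + z.2.2 ^ 2)) / (2 * z.1)) *
            (U2 z * pd (0, 1, 0) K z + U3 z * pd (0, 0, 1) K z) = 0) :
    ∀ z ∈ D,
      (pd (1, 0, 0) (fun w => bernoulliDensity γ U1 U2 U3 B K w * U1 w) z
          + ((1 + (z.2.1 ^ 2 + z.2.2 ^ 2)) / (2 * z.1)) *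
              (pd (0, 1, 0) (fun w => bernoulliDensity γ U1 U2 U3 B K w * U2 w) z
                + pd (0, 0, 1) (fun w => bernoulliDensity γ U1 U2 U3 B K w * U3 w) z)
          + (2 / z.1) * bernoulliDensity γ U1 U2 U3 B K z * U1 z
          - (bernoulliDensity γ U1 U2 U3 B K z / z.1) *
              (z.2.1 * U2 z + z.2.2 * U3 z) = 0)
      ↔
      (((γ - 1) * (B z - (U1 z ^ 2 + U2 z ^ 2 + U3 z ^ 2) / 2) - U1 z ^ 2) *
            pd (1, 0, 0) U1 z
          + ((1 + (z.2.1 ^ 2 + z.2.2 ^ 2)) / (2 * z.1)) *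
              ((γ - 1) * (B z - (U1 z ^ 2 + U2 z ^ 2 + U3 z ^ 2) / 2)) *
              (pd (0, 1, 0) U2 z + pd (0, 0, 1) U3 z)
          + ((γ - 1) * (B z - (U1 z ^ 2 + U2 z ^ 2 + U3 z ^ 2) / 2) / z.1) *
              (2 * U1 z - z.2.1 * U2 z - z.2.2 * U3 z)
        = U1 z * (U2 z * pd (1, 0, 0) U2 z + U3 z * pd (1, 0, 0) U3 z)
            + ((1 + (z.2.1 ^ 2 + z.2.2 ^ 2)) / (2 * z.1)) *
                (U2 z * (U1 z * pd (0, 1, 0) U1 z + U2 z * pd (0, 1, 0) U2 z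
                      + U3 z * pd (0, 1, 0) U3 z)
                  + U3 z * (U1 z * pd (0, 0, 1) U1 z + U2 z * pd (0, 0, 1) U2 z
                      + U3 z * pd (0, 0, 1) U3 z))) := by
  intro z hz
  have hdiff {f : ℝ × ℝ × ℝ → ℝ} (hf : ContDiffOn ℝ 1 f D) : DifferentiableAt ℝ f z :=
    (hf.differentiableOn one_ne_zero).differentiableAt (hD.mem_nhds hz)
  exact (continuity_eq_zero_iff_mul_sphericalDiv_eq hγ (hdiff hU1) (hdiff hU2) (hdiff hU3)
    (hdiff hB) (hdiff hK) (hKpos z hz) (hBq z hz) (htranB z hz) (htranK z hz)).trans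
    (deformation_iff_mul_sphericalDiv_eq γ U1 U2 U3 B z).symm

/-- with the density given by Bernoulli's law, and assuming the transport
equations for `B` and `K`, the continuity equation in spherical projection coordinates is
equivalent to the deformation (first deformation-curl) equation. -/
theorem continuity_iff_deformation (γ : ℝ) (hγ : 1 < γ)
    (D : Set (ℝ × ℝ × ℝ)) (hD : IsOpen D) (hDz : ∀ z ∈ D, 0 < z.1)
    (U1 U2 U3 B K : ℝ × ℝ × ℝ → ℝ)
    (hU1 : ContDiffOn ℝ 1 U1 D) (hU2 : ContDiffOn ℝ 1 U2 D) (hU3 : ContDiffOn ℝ 1 U3 D)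
    (hB : ContDiffOn ℝ 1 B D) (hK : ContDiffOn ℝ 1 K D)
    (hKpos : ∀ z ∈ D, 0 < K z)
    (hBq : ∀ z ∈ D, 0 < B z - (U1 z ^ 2 + U2 z ^ 2 + U3 z ^ 2) / 2)
    (htranB : ∀ z ∈ D,
      U1 z * pd (1, 0, 0) B z
        + ((1 + (z.2.1 ^ 2 + z.2.2 ^ 2)) / (2 * z.1)) *
            (U2 z * pd (0, 1, 0) B z + U3 z * pd (0, 0, 1) B z) = 0)
    (htranK : ∀ z ∈ D,
      U1 z * pd (1, 0, 0) K z
        + ((1 + (z.2.1 ^ 2 + z.2.2 ^ 2)) / (2 * z.1)) *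
            (U2 z * pd (0, 1, 0) K z + U3 z * pd (0, 0, 1) K z) = 0) :
    ∀ z ∈ D,
      (pd (1, 0, 0) (fun w => bernoulliDensity γ U1 U2 U3 B K w * U1 w) z
          + ((1 + (z.2.1 ^ 2 + z.2.2 ^ 2)) / (2 * z.1)) *
              (pd (0, 1, 0) (fun w => bernoulliDensity γ U1 U2 U3 B K w * U2 w) z
                + pd (0, 0, 1) (fun w => bernoulliDensity γ U1 U2 U3 B K w * U3 w) z)
          + (2 / z.1) * bernoulliDensity γ U1 U2 U3 B K z * U1 z
          - (bernoulliDensity γ U1 U2 U3 B K z / z.1) *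
              (z.2.1 * U2 z + z.2.2 * U3 z) = 0)
      ↔
      (((γ - 1) * (B z - (U1 z ^ 2 + U2 z ^ 2 + U3 z ^ 2) / 2) - U1 z ^ 2) *
            pd (1, 0, 0) U1 z
          + ((1 + (z.2.1 ^ 2 + z.2.2 ^ 2)) / (2 * z.1)) *
              ((γ - 1) * (B z - (U1 z ^ 2 + U2 z ^ 2 + U3 z ^ 2) / 2)) *
              (pd (0, 1, 0) U2 z + pd (0, 0, 1) U3 z)
          + ((γ - 1) * (B z - (U1 z ^ 2 + U2 z ^ 2 + U3 z ^ 2) / 2) / z.1) *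
              (2 * U1 z - z.2.1 * U2 z - z.2.2 * U3 z)
        = U1 z * (U2 z * pd (1, 0, 0) U2 z + U3 z * pd (1, 0, 0) U3 z)
            + ((1 + (z.2.1 ^ 2 + z.2.2 ^ 2)) / (2 * z.1)) *
                (U2 z * (U1 z * pd (0, 1, 0) U1 z + U2 z * pd (0, 1, 0) U2 z
                      + U3 z * pd (0, 1, 0) U3 z)
                  + U3 z * (U1 z * pd (0, 0, 1) U1 z + U2 z * pd (0, 0, 1) U2 z
                      + U3 z * pd (0, 0, 1) U3 z))) :=
  continuity_iff_deformation_general γ hγ D hD U1 U2 U3 B K hU1 hU2 hU3 hB hK hKpos hBq htranB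
    htranK
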